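/- arXiv:2210.12245 — 8 statements merged into one kernel-verified Lean document; each statement's English description precedes it below -/
import Mathlib

section
/- If a finite group G acting linearly on a finite-dimensional vector space V over a field F of characteristic p > 2 contains a nondiagonalizable reflection (an element h with fixed space of codimension 1 that is not diagonalizable), then the transfer map T : V → V, defined by T(v) = Σ_{a∈G} a·v, is identically zero. -/
/-!
Put `n = 1 - h`. It has rank one, so `n * n = c • n` for a scalar `c`; if `c ≠ 0` then
`c⁻¹ • n` is a projection and `h` is diagonalizable, hence `n ^ 2 = 0`. Then `h ^ i = 1 - i • n`,
so `h` has order `p` and `∑_{i < p} h ^ i = p - (p (p - 1) / 2) • n = 0` because `p` is odd.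
Splitting `G` into cosets of `⟨h⟩` factors the transfer through this vanishing sum.
-/

def IsDiagonalizable {F V : Type*} [Field F] [AddCommGroup V] [Module F V]
    (f : V →ₗ[F] V) : Prop :=
  ∃ (ι : Type) (b : Module.Basis ι F V), ∀ i, ∃ c : F, f (b i) = c • b i

open Module Finset

section Unipotent

variable {R : Type*} [Ring R] {n : R}

theorem one_sub_pow_of_sq_eq_zero (hn : n ^ 2 = 0) (k : ℕ) : (1 - n) ^ k = 1 - k * n := by
  induction k with
  | zero => simp
  | succ k ih =>
    rw [pow_succ, ih, Nat.cast_succ]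
    simp only [sub_mul, mul_sub, one_mul, mul_one, add_mul, mul_assoc, ← sq, hn, mul_zero]
    abel

theorem orderOf_one_sub_of_sq_eq_zero {p : ℕ} [Fact p.Prime] (hpR : (p : R) = 0)
    (hn : n ^ 2 = 0) (hn0 : n ≠ 0) : orderOf (1 - n) = p := by
  refine orderOf_eq_prime ?_ (by simpa using hn0)
  rw [one_sub_pow_of_sq_eq_zero hn, hpR, zero_mul, sub_zero]

theorem sum_range_one_sub_pow_of_sq_eq_zero {p : ℕ} (hpR : (p : R) = 0) (hp : Odd p)
    (hn : n ^ 2 = 0) : ∑ i ∈ range p, (1 - n) ^ i = 0 := by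
  obtain ⟨m, rfl⟩ := hp
  have hsum : ∑ i ∈ range (2 * m + 1), (i : R) = ((2 * m + 1) * m : ℕ) := by
    rw [← Nat.cast_sum, sum_range_id, Nat.add_sub_cancel, Nat.mul_div_assoc _ (dvd_mul_right 2 m),
      Nat.mul_div_cancel_left _ two_pos]
  simp only [one_sub_pow_of_sq_eq_zero hn, sum_sub_distrib, ← sum_mul, hsum, sum_const,
    card_range, nsmul_eq_mul, mul_one, Nat.cast_mul, hpR, zero_mul, sub_zero]

end Unipotent

section GroupSums

variable {G R : Type*} [Group G] [Semiring R] (ρ : G →* R)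

theorem sum_eq_zero_of_sum_subgroup_eq_zero [Fintype G] (K : Subgroup G) [Fintype K]
    (hK : ∑ k : K, ρ k = 0) : ∑ g, ρ g = 0 := by
  classical
  obtain ⟨S, hS, -⟩ := Subgroup.exists_isComplement_left K 1
  rw [← Fintype.sum_bijective (fun x : S × K => x.1.1 * x.2.1) hS (fun x => ρ (x.1 * x.2)) _
    fun _ => rfl]
  simp only [map_mul, Fintype.sum_prod_type, ← mul_sum, hK, mul_zero, sum_const_zero]

theorem sum_zpowers_eq_sum_range_orderOf {g : G} (hg : IsOfFinOrder g)
    [Fintype (Subgroup.zpowers g)] :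
    ∑ k : Subgroup.zpowers g, ρ k = ∑ i ∈ range (orderOf g), ρ g ^ i := by
  rw [← Fin.sum_univ_eq_sum_range, ← (finEquivZPowers hg).sum_comp]
  simp [finEquivZPowers_apply]

end GroupSums

section LinearAlgebra

variable {F V : Type*} [Field F] [AddCommGroup V] [Module F V]

theorem LinearMap.exists_mul_self_eq_smul_of_finrank_range_eq_one (f : V →ₗ[F] V)
    (hf : finrank F (LinearMap.range f) = 1) : ∃ c : F, f * f = c • f := by
  obtain ⟨c, hc, -⟩ := LinearMap.existsUnique_eq_smul_id_of_finrank_eq_one hf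
    (f.restrict fun x _ => LinearMap.mem_range_self f x)
  refine ⟨c, LinearMap.ext fun v => ?_⟩
  simpa using congr(($hc ⟨f v, LinearMap.mem_range_self f v⟩ : V))

theorem isDiagonalizable_of_isCompl [FiniteDimensional F V] (f : V →ₗ[F] V)
    {p q : Submodule F V} (hpq : IsCompl p q) (a b : F) (hp : ∀ x ∈ p, f x = a • x)
    (hq : ∀ x ∈ q, f x = b • x) : IsDiagonalizable f := by
  refine ⟨_, ((finBasis F p).prod (finBasis F q)).map (p.prodEquivOfIsCompl q hpq), ?_⟩
  rintro (i | i)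
  · exact ⟨a, by simpa using hp _ (finBasis F p i).2⟩
  · exact ⟨b, by simpa using hq _ (finBasis F q i).2⟩

theorem isDiagonalizable_one_sub_of_mul_self_eq_smul [FiniteDimensional F V] (f : V →ₗ[F] V)
    {c : F} (hc : c ≠ 0) (hf : f * f = c • f) : IsDiagonalizable (1 - f) := by
  have he : IsIdempotentElem (c⁻¹ • f) := by
    rw [IsIdempotentElem, smul_mul_smul_comm, hf, smul_smul, mul_assoc, inv_mul_cancel₀ hc,
      mul_one]
  refine isDiagonalizable_of_isCompl _ (LinearMap.IsIdempotentElem.isCompl he) (1 - c) 1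
    (fun x hx => ?_) (fun x hx => ?_)
  · have hfx : f x = c • x :=
      calc f x = c • (c⁻¹ • f x) := by rw [smul_smul, mul_inv_cancel₀ hc, one_smul]
        _ = c • x := congrArg (c • ·) ((LinearMap.IsIdempotentElem.mem_range_iff he).mp hx)
    simp [sub_smul, hfx]
  · have hfx : f x = 0 :=
      (smul_eq_zero.mp (show c⁻¹ • f x = 0 from hx)).resolve_left (inv_ne_zero hc)
    simp [hfx]

theorem sq_one_sub_eq_zero_of_not_isDiagonalizable [FiniteDimensional F V] {u : V →ₗ[F] V}
    (hu : finrank F (LinearMap.range (1 - u)) = 1) (hnd : ¬ IsDiagonalizable u) :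
    (1 - u) ^ 2 = 0 := by
  obtain ⟨c, hc⟩ := (1 - u).exists_mul_self_eq_smul_of_finrank_range_eq_one hu
  obtain rfl : c = 0 := by
    by_contra hc0
    exact hnd (sub_sub_cancel 1 u ▸ isDiagonalizable_one_sub_of_mul_self_eq_smul _ hc0 hc)
  rw [sq, hc, zero_smul]

end LinearAlgebra

/-- If a finite group `G ⊆ GL(V)` over a field of characteristic `p > 2` contains a
nondiagonalizable reflection, then the transfer map `T(v) = ∑_{a ∈ G} a • v` is zero. -/
theorem stmt0 {F V : Type*} [Field F] [AddCommGroup V] [Module F V]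
    [FiniteDimensional F V] (p : ℕ) [Fact p.Prime] [CharP F p] (hp : 2 < p)
    (G : Subgroup (V ≃ₗ[F] V)) [Fintype G]
    (h : V ≃ₗ[F] V) (hhG : h ∈ G)
    (hrefl : Module.finrank F (V ⧸ LinearMap.ker (1 - (h : V →ₗ[F] V))) = 1)
    (hnd : ¬ IsDiagonalizable (h : V →ₗ[F] V)) :
    ∀ v : V, ∑ a : G, (a : V ≃ₗ[F] V) v = 0 := by
  classical
  set n : V →ₗ[F] V := 1 - h
  have hrange : finrank F (LinearMap.range n) = 1 :=
    (LinearMap.quotKerEquivRange n).finrank_eq.symm.trans hrefl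
  have hn2 : n ^ 2 = 0 := sq_one_sub_eq_zero_of_not_isDiagonalizable hrange hnd
  have hn0 : n ≠ 0 := by
    rintro hn0
    rw [hn0, LinearMap.range_zero, finrank_bot] at hrange
    exact zero_ne_one hrange
  have hpEnd : (p : V →ₗ[F] V) = 0 := by
    rw [← map_natCast (algebraMap F _), CharP.cast_eq_zero, map_zero]
  let ρ : G →* (V →ₗ[F] V) :=
    LinearEquiv.automorphismGroup.toLinearMapMonoidHom.comp G.subtype
  have hρ : Function.Injective ρ := LinearEquiv.toLinearMap_injective.comp Subtype.val_injective
  let g : G := ⟨h, hhG⟩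
  have hρg : ρ g = 1 - n := (sub_sub_cancel _ _).symm
  have horder : orderOf g = p := by
    rw [← orderOf_injective ρ hρ, hρg, orderOf_one_sub_of_sq_eq_zero hpEnd hn2 hn0]
  have hsum_zpowers : ∑ k : Subgroup.zpowers g, ρ k = 0 := by
    rw [sum_zpowers_eq_sum_range_orderOf ρ (isOfFinOrder_of_finite g), horder, hρg,
      sum_range_one_sub_pow_of_sq_eq_zero hpEnd ((Fact.out : p.Prime).odd_of_ne_two hp.ne') hn2]
  intro v
  simpa [ρ] using congr($(sum_eq_zero_of_sum_subgroup_eq_zero ρ _ hsum_zpowers) v)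
end

section
/- If h ∈ GL(V) is a reflection on a finite-dimensional vector space V over a field F, then either h is diagonalizable with order coprime to char F, or h is nondiagonalizable with order equal to char F. -/
open Module

section

variable {F V : Type*} [Field F] [AddCommGroup V] [Module F V]

theorem isDiagonalizable_of_span_eigenvectors_eq_top [FiniteDimensional F V] {f : End F V}
    (hf : Submodule.span F {x | ∃ c : F, f x = c • x} = ⊤) : IsDiagonalizable f := by
  obtain ⟨s, hs, hspan, hli⟩ := exists_linearIndependent F {x | ∃ c : F, f x = c • x}
  let b := Basis.mk hli (by rw [Subtype.range_coe, hspan, hf])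
  have : Finite s := Module.Finite.finite_basis b
  refine ⟨Fin (Nat.card s), b.reindex (Finite.equivFin s), fun i => ?_⟩
  rw [Basis.reindex_apply, Basis.mk_apply]
  exact hs (Subtype.mem _)

theorem IsDiagonalizable.eq_one_of_sub_one_sq_eq_zero {f : End F V} (hf : IsDiagonalizable f)
    (h2 : (f - 1) ^ 2 = 0) : f = 1 := by
  obtain ⟨ι, b, hb⟩ := hf
  refine b.ext fun i => ?_
  obtain ⟨c, hc⟩ := hb i
  have hsub : (f - 1) (b i) = (c - 1) • b i := by simp [hc, sub_smul]
  have hsq := LinearMap.congr_fun h2 (b i)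
  rw [sq, End.mul_apply, hsub, map_smul, hsub, smul_smul, ← sq, LinearMap.zero_apply] at hsq
  have hc1 : c = 1 := by simpa [sub_eq_zero, b.ne_zero i] using hsq
  simp [hc, hc1]

variable (F) in
theorem orderOf_one_add_of_sq_eq_zero {A : Type*} [Ring A] [Algebra F A] {N : A}
    (hN : N ^ 2 = 0) (hN0 : N ≠ 0) : orderOf (1 + N) = ringChar F := by
  have hpow (k : ℕ) : (1 + N) ^ k = 1 + (k : F) • N := by
    induction k with
    | zero => simp
    | succ k ih =>
      rw [pow_succ, ih]
      simp only [add_mul, mul_add, one_mul, mul_one, smul_mul_assoc, ← sq, hN, smul_zero,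
        Nat.cast_succ, add_smul, one_smul]
      abel
  have hiff (k : ℕ) : (1 + N) ^ k = 1 ↔ ringChar F ∣ k := by
    rw [hpow, add_eq_left, smul_eq_zero, ringChar.spec]
    simp [hN0]
  exact Nat.dvd_antisymm (orderOf_dvd_of_pow_eq_one ((hiff _).2 dvd_rfl))
    ((hiff _).1 (pow_orderOf_eq_one _))

theorem not_ringChar_dvd_orderOf {c : F} (hc : IsOfFinOrder c) : ¬ ringChar F ∣ orderOf c := by
  have : NeZero (orderOf c) := ⟨hc.orderOf_pos.ne'⟩
  have := (IsPrimitiveRoot.orderOf c).neZero' (R := F)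
  rw [← ringChar.spec]
  exact NeZero.ne _

theorem exists_sub_one_mul_sub_smul_eq_zero {f : End F V}
    (hf : finrank F (V ⧸ LinearMap.ker (1 - f)) = 1) : ∃ c : F, (f - 1) * (f - c • 1) = 0 := by
  have hW : LinearMap.ker (1 - f) ≤ (LinearMap.ker (1 - f)).comap f := fun w hw => by
    have hfw : f w = w := (sub_eq_zero.1 hw).symm
    rw [Submodule.mem_comap, hfw]
    exact hw
  obtain ⟨c, hc, -⟩ := (Submodule.mapQ _ _ f hW).existsUnique_eq_smul_id_of_finrank_eq_one hf
  refine ⟨c, LinearMap.ext fun x => ?_⟩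
  have hx := LinearMap.congr_fun hc (Submodule.Quotient.mk x)
  rw [Submodule.mapQ_apply, LinearMap.smul_apply, LinearMap.id_apply,
    ← Submodule.Quotient.mk_smul, Submodule.Quotient.eq, LinearMap.mem_ker] at hx
  change (f - 1) (f x - c • x) = 0
  rw [← neg_sub, LinearMap.neg_apply, hx, neg_zero]

theorem pow_apply_of_apply_eq_smul {f : End F V} {c : F} {x : V} (hx : f x = c • x) (k : ℕ) :
    (f ^ k) x = c ^ k • x := by
  induction k with
  | zero => simp
  | succ k ih => rw [pow_succ, End.mul_apply, hx, map_smul, ih, smul_smul, pow_succ']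

theorem sup_ker_sub_smul_eq_top {f : End F V} {a b : F} (hab : a ≠ b)
    (h : (f - a • 1) * (f - b • 1) = 0) :
    LinearMap.ker (f - a • 1) ⊔ LinearMap.ker (f - b • 1) = ⊤ := by
  have h' : (f - b • 1) * (f - a • 1) = 0 := by
    rw [← h]
    simp only [sub_mul, mul_sub, smul_mul_assoc, mul_smul_comm, one_mul, mul_one, smul_smul,
      smul_sub, mul_comm a b]
    abel
  refine eq_top_iff.2 fun x _ => Submodule.mem_sup.2
    ⟨(a - b)⁻¹ • (f - b • 1) x, ?_, -(a - b)⁻¹ • (f - a • 1) x, ?_, ?_⟩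
  · rw [LinearMap.mem_ker, map_smul, ← End.mul_apply, h, LinearMap.zero_apply, smul_zero]
  · rw [LinearMap.mem_ker, map_smul, ← End.mul_apply, h', LinearMap.zero_apply, smul_zero]
  · rw [neg_smul, ← sub_eq_add_neg, ← smul_sub, ← LinearMap.sub_apply]
    simp only [LinearMap.sub_apply, LinearMap.smul_apply, End.one_apply, sub_sub_sub_cancel_left]
    rw [← sub_smul, smul_smul, inv_mul_cancel₀ (sub_ne_zero.2 hab), one_smul]

theorem isDiagonalizable_of_sub_smul_mul_sub_smul_eq_zero [FiniteDimensional F V] {f : End F V}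
    {a b : F} (hab : a ≠ b) (h : (f - a • 1) * (f - b • 1) = 0) : IsDiagonalizable f := by
  refine isDiagonalizable_of_span_eigenvectors_eq_top (eq_top_iff.2 ?_)
  rw [← sup_ker_sub_smul_eq_top hab h, sup_le_iff]
  constructor <;> exact fun x hx => Submodule.subset_span ⟨_, by simpa [sub_eq_zero] using hx⟩

theorem orderOf_eq_orderOf_of_sup_ker_eq_top {f : End F V} {c : F} (hf : f ≠ 1)
    (hsup : LinearMap.ker (f - 1) ⊔ LinearMap.ker (f - c • 1) = ⊤) : orderOf f = orderOf c := by
  obtain ⟨u, hu, hu0⟩ : ∃ u ∈ LinearMap.ker (f - c • 1), u ≠ 0 := by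
    refine Submodule.exists_mem_ne_zero_of_ne_bot fun hbot => hf ?_
    rwa [hbot, sup_bot_eq, LinearMap.ker_eq_top, sub_eq_zero] at hsup
  have hfu : f u = c • u := by simpa [sub_eq_zero] using hu
  refine orderOf_eq_orderOf_iff.2 fun k => ⟨fun hk => ?_, fun hk => ?_⟩
  · have hu' := pow_apply_of_apply_eq_smul hfu k
    rw [hk, End.one_apply] at hu'
    exact smul_left_injective F hu0 (by simpa using hu'.symm)
  · refine LinearMap.ext_on (s := LinearMap.ker (f - 1) ∪ LinearMap.ker (f - c • 1)) ?_ ?_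
    · rw [Submodule.span_union, Submodule.span_eq, Submodule.span_eq, hsup]
    · rintro x (hx | hx)
      · have hfx : f x = (1 : F) • x := by simpa [sub_eq_zero] using hx
        simpa using pow_apply_of_apply_eq_smul hfx k
      · have hfx : f x = c • x := by simpa [sub_eq_zero] using hx
        simpa [hk] using pow_apply_of_apply_eq_smul hfx k

end

/-- A reflection of finite order is either diagonalizable with order coprime to `char F`
(i.e. not divisible by it), or nondiagonalizable with order equal to `char F`. -/
theorem stmt2 {F V : Type*} [Field F] [AddCommGroup V] [Module F V]
    [FiniteDimensional F V] (h : V ≃ₗ[F] V) (m : ℕ) (hm : 0 < m) (hpow : h ^ m = 1)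
    (hrefl : Module.finrank F (V ⧸ LinearMap.ker (1 - (h : V →ₗ[F] V))) = 1) :
    (IsDiagonalizable (h : V →ₗ[F] V) ∧ ¬ (ringChar F ∣ orderOf h)) ∨
      (¬ IsDiagonalizable (h : V →ₗ[F] V) ∧ orderOf h = ringChar F) := by
  set f : End F V := (h : V →ₗ[F] V)
  have horder : orderOf f = orderOf h := orderOf_injective
    LinearEquiv.automorphismGroup.toLinearMapMonoidHom LinearEquiv.toLinearMap_injective h
  have hf1 : f ≠ 1 := by
    intro hf
    rw [hf, sub_self, LinearMap.ker_zero, finrank_zero_of_subsingleton] at hrefl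
    exact zero_ne_one hrefl
  obtain ⟨c, hc⟩ := exists_sub_one_mul_sub_smul_eq_zero hrefl
  rw [← horder]
  rcases eq_or_ne c 1 with rfl | hc1
  · rw [one_smul, ← sq] at hc
    refine Or.inr ⟨fun hd => hf1 (hd.eq_one_of_sub_one_sq_eq_zero hc), ?_⟩
    simpa using orderOf_one_add_of_sq_eq_zero F hc (sub_ne_zero.2 hf1)
  · replace hc : (f - (1 : F) • 1) * (f - c • 1) = 0 := by rwa [one_smul]
    have hsup := sup_ker_sub_smul_eq_top hc1.symm hc
    rw [one_smul] at hsup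
    have hordc := orderOf_eq_orderOf_of_sup_ker_eq_top hf1 hsup
    refine Or.inl ⟨isDiagonalizable_of_sub_smul_mul_sub_smul_eq_zero hc1.symm hc, ?_⟩
    rw [hordc]
    refine not_ringChar_dvd_orderOf (orderOf_pos_iff.1 ?_)
    rw [← hordc, horder]
    exact (isOfFinOrder_iff_pow_eq_one.2 ⟨m, hm, hpow⟩).orderOf_pos
end

section
/- Suppose codim V^h ≥ 1 and α : Λ²V → V is a linear map such that α(u∧v)·(w − h·w) + α(v∧w)·(u − h·u) + α(w∧u)·(v − h·v) = 0 in the symmetric algebra S(V) for all u,v,w ∈ V. Then α(u∧v) = 0 for all u,v ∈ V^h. -/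
open TensorProduct

/-- The image of the product `a·b ∈ S²(V)` under the (char ≠ 2) embedding
`S²(V) ↪ V ⊗ V`, `a·b ↦ a ⊗ b + b ⊗ a`.  An expression of degree-2 elements of the
symmetric algebra `S(V)` vanishes iff its image under this embedding vanishes. -/
noncomputable def symProd {F V : Type*} [Field F] [AddCommGroup V] [Module F V]
    (a b : V) : V ⊗[F] V := a ⊗ₜ[F] b + b ⊗ₜ[F] a

/-- If `codim V^h ≥ 1` and the cyclic sum
`α(u∧v)(w - h·w) + α(v∧w)(u - h·u) + α(w∧u)(v - h·v)` vanishes in `S(V)`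
for all `u,v,w`, then `α(u∧v) = 0` for all `u, v ∈ V^h`.
Here the alternating bilinear map `α` encodes a linear map `Λ²V → V`. -/
theorem stmt8 {F V : Type*} [Field F] [AddCommGroup V] [Module F V]
    [FiniteDimensional F V] (hchar : (2 : F) ≠ 0)
    (h : V ≃ₗ[F] V)
    (hcodim : 1 ≤ Module.finrank F (V ⧸ LinearMap.ker (1 - (h : V →ₗ[F] V))))
    (α : V →ₗ[F] V →ₗ[F] V) (halt : ∀ u : V, α u u = 0)
    (hcyc : ∀ u v w : V,
      symProd (α u v) (w - h w) + symProd (α v w) (u - h u) + symProd (α w u) (v - h v)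
        = (0 : V ⊗[F] V)) :
    ∀ u ∈ LinearMap.ker (1 - (h : V →ₗ[F] V)),
      ∀ v ∈ LinearMap.ker (1 - (h : V →ₗ[F] V)), α u v = 0 := by
  intro u hu v hv
  rw [LinearMap.mem_ker] at hu hv
  have hu' : u - h u = 0 := by simpa using hu
  have hv' : v - h v = 0 := by simpa using hv
  -- find w with w - h w ≠ 0
  obtain ⟨w, hw⟩ : ∃ w : V, w - h w ≠ 0 := by
    by_contra hc
    push_neg at hc
    have hker : LinearMap.ker (1 - (h : V →ₗ[F] V)) = ⊤ := by
      ext x; simp only [LinearMap.mem_ker, Submodule.mem_top, iff_true]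
      simpa using hc x
    rw [hker] at hcodim
    have : Module.finrank F (V ⧸ (⊤ : Submodule F V)) = 0 := by
      have : Subsingleton (V ⧸ (⊤ : Submodule F V)) :=
        Submodule.Quotient.subsingleton_iff.mpr rfl
      exact Module.finrank_zero_of_subsingleton
    omega
  set a := α u v with ha
  have key : symProd (F := F) a (w - h w) = 0 := by
    have := hcyc u v w
    have h2 : α v w ⊗ₜ[F] (u - h u) = (0 : V ⊗[F] V) := by rw [hu']; simp
    have h3 : α w u ⊗ₜ[F] (v - h v) = (0 : V ⊗[F] V) := by rw [hv']; simp
    simp only [symProd, hu', hv', TensorProduct.tmul_zero, TensorProduct.zero_tmul,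
      add_zero, zero_add] at this
    exact this
  -- get dual functional
  obtain ⟨f, hf1⟩ : ∃ f : Module.Dual F V, f (w - h w) = 1 := by
    have : ¬ ∀ φ : Module.Dual F V, φ (w - h w) = 0 := by
      rw [Module.forall_dual_apply_eq_zero_iff]; exact hw
    push_neg at this
    obtain ⟨φ, hφ⟩ := this
    exact ⟨(φ (w - h w))⁻¹ • φ, by
      simp only [LinearMap.smul_apply, smul_eq_mul]; exact inv_mul_cancel₀ hφ⟩
  set c := w - h w
  -- apply f ⊗ id
  have g := TensorProduct.lift ((LinearMap.lsmul F V).comp f)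
  have hg : (TensorProduct.lift ((LinearMap.lsmul F V).comp f)) (a ⊗ₜ[F] c + c ⊗ₜ[F] a) = 0 := by
    rw [show a ⊗ₜ[F] c + c ⊗ₜ[F] a = symProd (F := F) a c from rfl, key, map_zero]
  simp only [map_add, TensorProduct.lift.tmul, LinearMap.comp_apply, LinearMap.lsmul_apply,
    hf1] at hg
  -- hg : f a • c + 1 • a = 0
  rw [one_smul] at hg
  have haeq : a = -(f a • c) := eq_neg_of_add_eq_zero_right hg
  have hfa : f a = 0 := by
    have : f a = -(f a) := by
      conv_lhs => rw [haeq]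
      simp [hf1]
    have h2 : (2 : F) * f a = 0 := by ring_nf; linear_combination this
    exact (mul_eq_zero.mp h2).resolve_left hchar
  rw [haeq, hfa, zero_smul, neg_zero]
end

section
/- Suppose codim V^h ≥ 2 and α : Λ²V → V is a linear map whose cyclic sum α(u∧v)(ŵ) + α(v∧w)(û) + α(w∧u)(v̂) vanishes in S(V) for all u,v,w ∈ V, where x̂ = x − h·x. Then for every u ∈ V^h and v ∈ V, the vector α(u∧v) lies in the span of v − h·v. -/
open TensorProduct

private lemma key_lemma {F V : Type*} [Field F] [AddCommGroup V] [Module F V]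
    (hchar : (2 : F) ≠ 0) {a b c d : V}
    (hb : b ∉ Submodule.span F {d})
    (heq : a ⊗ₜ[F] b + b ⊗ₜ[F] a = c ⊗ₜ[F] d + d ⊗ₜ[F] c) :
    a ∈ Submodule.span F {d} := by
  obtain ⟨φ, hφb, hφmap⟩ := (Submodule.span F {d}).exists_dual_map_eq_bot_of_notMem hb inferInstance
  have hφd : φ d = 0 := by
    have : φ d ∈ (Submodule.span F {d}).map φ :=
      Submodule.mem_map_of_mem (Submodule.mem_span_singleton_self d)
    rw [hφmap] at this
    simpa using this
  set L : V ⊗[F] V →ₗ[F] V := TensorProduct.lift ((LinearMap.lsmul F V).comp φ) with hL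
  have hLt : ∀ x y : V, L (x ⊗ₜ[F] y) = φ x • y := fun x y => rfl
  have h1 : φ a • b + φ b • a = φ c • d + φ d • c := by
    have := congrArg L heq
    simpa [map_add, hLt] using this
  have h2 : φ a * φ b + φ b * φ a = 0 := by
    have := congrArg φ h1
    simpa [map_add, map_smul, hφd, smul_eq_mul] using this
  have hφa : φ a = 0 := by
    have h4 : (2 : F) * (φ a * φ b) = 0 := by linear_combination h2
    rcases mul_eq_zero.mp h4 with h | h
    · exact absurd h hchar
    · rcases mul_eq_zero.mp h with h | h
      · exact h
      · exact absurd h hφb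
  have h3 : φ b • a = φ c • d := by
    rw [hφa, hφd] at h1; simpa using h1
  have : a = ((φ b)⁻¹ * φ c) • d := by
    rw [mul_smul, ← h3, smul_smul, inv_mul_cancel₀ hφb, one_smul]
  rw [this]
  exact Submodule.smul_mem _ _ (Submodule.mem_span_singleton_self d)

/-- If `codim V^h ≥ 2` and the cyclic sum
`α(u∧v)(ŵ) + α(v∧w)(û) + α(w∧u)(v̂)` (with `x̂ = x - h·x`) vanishes in `S(V)` for all
`u,v,w`, then for every `u ∈ V^h` and `v ∈ V`, `α(u∧v)` lies in the span of `v - h·v`. -/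
theorem stmt9 {F V : Type*} [Field F] [AddCommGroup V] [Module F V]
    [FiniteDimensional F V] (hchar : (2 : F) ≠ 0)
    (h : V ≃ₗ[F] V)
    (hcodim : 2 ≤ Module.finrank F (V ⧸ LinearMap.ker (1 - (h : V →ₗ[F] V))))
    (α : V →ₗ[F] V →ₗ[F] V) (halt : ∀ u : V, α u u = 0)
    (hcyc : ∀ u v w : V,
      symProd (α u v) (w - h w) + symProd (α v w) (u - h u) + symProd (α w u) (v - h v)
        = (0 : V ⊗[F] V)) :
    ∀ u ∈ LinearMap.ker (1 - (h : V →ₗ[F] V)), ∀ v : V,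
      α u v ∈ Submodule.span F {v - h v} := by
  intro u hu v
  set f : V →ₗ[F] V := 1 - (h : V →ₗ[F] V) with hf
  have hfapp : ∀ x : V, f x = x - h x := by
    intro x; simp [hf, LinearMap.sub_apply]
  have hfu : u - h u = 0 := by
    have := hu
    rw [LinearMap.mem_ker] at this
    rw [← hfapp]; exact this
  have hskew : ∀ x y : V, α x y + α y x = 0 := by
    intro x y
    have h5 := halt (x + y)
    simp only [map_add, LinearMap.add_apply, halt x, halt y, add_zero, zero_add] at h5
    linear_combination (norm := abel) h5
  -- find w with f w ∉ span {v - h v}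
  have hexw : ∃ w : V, w - h w ∉ Submodule.span F {v - h v} := by
    by_contra hcon
    push_neg at hcon
    have hle : LinearMap.range f ≤ Submodule.span F {v - h v} := by
      rintro x ⟨w, rfl⟩
      rw [hfapp]; exact hcon w
    have hr : Module.finrank F (LinearMap.range f) =
        Module.finrank F (V ⧸ LinearMap.ker f) :=
      (f.quotKerEquivRange).symm.finrank_eq
    have hs : Module.finrank F (Submodule.span F ({v - h v} : Set V)) ≤ 1 := by
      by_cases hd : v - h v = 0
      · rw [hd, Submodule.span_zero_singleton]
        simp
      · rw [finrank_span_singleton hd]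
    have := Submodule.finrank_mono hle
    omega
  obtain ⟨w, hw⟩ := hexw
  -- rewrite the cyclic identity
  have heq : (α u v) ⊗ₜ[F] (w - h w) + (w - h w) ⊗ₜ[F] (α u v)
      = (α u w) ⊗ₜ[F] (v - h v) + (v - h v) ⊗ₜ[F] (α u w) := by
    have hc := hcyc u v w
    have hwu : α w u = - α u w := by
      have := hskew u w; linear_combination (norm := abel) this
    rw [hfu, hwu] at hc
    simp only [symProd, tmul_zero, zero_tmul, add_zero, neg_tmul, tmul_neg] at hc
    linear_combination (norm := abel) hc
  exact key_lemma hchar hw heq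
end

section
/- Suppose codim V^h > 2 and α : Λ²V → V is a linear map whose cyclic sum α(u∧v)(w − h·w) + α(v∧w)(u − h·u) + α(w∧u)(v − h·v) vanishes in S(V) for all u,v,w ∈ V. Then for all u,v ∈ V, the vector α(u∧v) lies in the span of {u − h·u, v − h·v}. -/
open TensorProduct

/-- If `codim V^h > 2` and the cyclic sum
`α(u∧v)(w - h·w) + α(v∧w)(u - h·u) + α(w∧u)(v - h·v)` vanishes in `S(V)` for all
`u,v,w`, then `α(u∧v) ∈ span{u - h·u, v - h·v}` for all `u,v ∈ V`. -/
theorem stmt10 {F V : Type*} [Field F] [AddCommGroup V] [Module F V]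
    [FiniteDimensional F V] (hchar : (2 : F) ≠ 0)
    (h : V ≃ₗ[F] V)
    (hcodim : 2 < Module.finrank F (V ⧸ LinearMap.ker (1 - (h : V →ₗ[F] V))))
    (α : V →ₗ[F] V →ₗ[F] V) (halt : ∀ u : V, α u u = 0)
    (hcyc : ∀ u v w : V,
      symProd (α u v) (w - h w) + symProd (α v w) (u - h u) + symProd (α w u) (v - h v)
        = (0 : V ⊗[F] V)) :
    ∀ u v : V, α u v ∈ Submodule.span F {u - h u, v - h v} := by
  intro u v
  set g : V →ₗ[F] V := 1 - (h : V →ₗ[F] V) with hgdef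
  have hgu : g u = u - h u := by simp [hgdef, LinearMap.sub_apply]
  have hgv : g v = v - h v := by simp [hgdef, LinearMap.sub_apply]
  set P : Submodule F V := Submodule.span F {u - h u, v - h v} with hP
  -- rank of g exceeds 2
  have hrange : 2 < Module.finrank F (LinearMap.range g) := by
    rwa [← (g.quotKerEquivRange).finrank_eq]
  -- span of two vectors has finrank ≤ 2
  have hPle : Module.finrank F P ≤ 2 := by
    classical
    calc Module.finrank F P ≤ ({u - h u, v - h v} : Set V).toFinset.card :=
          finrank_span_le_card _
      _ ≤ 2 := by
          rw [Set.toFinset_insert, Set.toFinset_singleton]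
          exact (Finset.card_insert_le _ _).trans (by simp)
  have hns : ¬ LinearMap.range g ≤ P := by
    intro hle
    have := Submodule.finrank_mono hle
    omega
  obtain ⟨x, hx, hxP⟩ := SetLike.not_le_iff_exists.mp hns
  obtain ⟨w, rfl⟩ := hx
  -- the quotient map and a functional
  set q := P.mkQ with hq
  have hq0 : q (g w) ≠ 0 := by
    simpa [hq, Submodule.Quotient.mk_eq_zero] using hxP
  obtain ⟨f₀, hf₀⟩ : ∃ f₀ : Module.Dual F (V ⧸ P), f₀ (q (g w)) ≠ 0 := by
    by_contra hc
    push_neg at hc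
    exact hq0 ((Module.forall_dual_apply_eq_zero_iff F _).mp hc)
  set f : V →ₗ[F] F := (f₀ (q (g w)))⁻¹ • (f₀ ∘ₗ q) with hf
  have hfw : f (g w) = 1 := by
    simp [hf, inv_mul_cancel₀ hf₀]
  have hmem : ∀ z ∈ P, f z = 0 := by
    intro z hz
    simp [hf, hq, (Submodule.Quotient.mk_eq_zero P).mpr hz]
  have hfu : f (u - h u) = 0 := hmem _ (Submodule.subset_span (by simp))
  have hfv : f (v - h v) = 0 := hmem _ (Submodule.subset_span (by simp))
  -- apply f ⊗ id
  set L : V ⊗[F] V →ₗ[F] V := TensorProduct.lift ((LinearMap.lsmul F V).comp f) with hL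
  have hLsym : ∀ a b : V, L (symProd a b) = f a • b + f b • a := by
    intro a b
    simp [hL, symProd]
  have hgw : g w = w - h w := by simp [hgdef, LinearMap.sub_apply]
  have hfu' : f (g u) = 0 := by rw [hgu]; exact hfu
  have hfv' : f (g v) = 0 := by rw [hgv]; exact hfv
  have E := congrArg L (hcyc u v w)
  rw [map_add, map_add, hLsym, hLsym, hLsym, map_zero] at E
  rw [← hgu, ← hgv, ← hgw] at E
  rw [hfu', hfv', hfw] at E
  -- E : f (α u v) • g w + 1 • α u v + (f (α v w) • g u + 0 • α v w) + (f (α w u) • g v + 0 • α w u) = 0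
  simp only [one_smul, zero_smul, add_zero] at E
  have E2 := congrArg f E
  rw [map_add, map_add, map_add, map_smul, map_smul, map_smul, map_zero, hfw] at E2
  rw [hfu', hfv'] at E2
  simp only [smul_eq_mul] at E2
  have hf0 : f (α u v) = 0 := by
    have h2 : (2 : F) * f (α u v) = 0 := by linear_combination E2
    exact (mul_eq_zero.mp h2).resolve_left hchar
  rw [hf0, zero_smul, zero_add] at E
  have key : α u v = (-(f (α v w))) • (u - h u) + (-(f (α w u))) • (v - h v) := by
    rw [← hgu, ← hgv]
    linear_combination (norm := module) E
  rw [key]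
  exact Submodule.add_mem _
    (Submodule.smul_mem _ _ (Submodule.subset_span (by simp)))
    (Submodule.smul_mem _ _ (Submodule.subset_span (by simp)))
end

section
/- If codim V^h = 1 and α : Λ²V → V is linear with α(u∧v) = 0 for all u,v ∈ V^h, then the cyclic sum α(u∧v)(w − h·w) + α(v∧w)(u − h·u) + α(w∧u)(v − h·v) vanishes in S(V) for all u,v,w ∈ V. -/
open TensorProduct

/-- If `codim V^h = 1` and `α(u∧v) = 0` for all `u,v ∈ V^h`, then the cyclic sum
`α(u∧v)(w - h·w) + α(v∧w)(u - h·u) + α(w∧u)(v - h·v)` vanishes in `S(V)` for all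
`u,v,w ∈ V`. -/
theorem stmt11 {F V : Type*} [Field F] [AddCommGroup V] [Module F V]
    [FiniteDimensional F V] (hchar : (2 : F) ≠ 0)
    (h : V ≃ₗ[F] V)
    (hcodim : Module.finrank F (V ⧸ LinearMap.ker (1 - (h : V →ₗ[F] V))) = 1)
    (α : V →ₗ[F] V →ₗ[F] V) (halt : ∀ u : V, α u u = 0)
    (hvan : ∀ u ∈ LinearMap.ker (1 - (h : V →ₗ[F] V)),
      ∀ v ∈ LinearMap.ker (1 - (h : V →ₗ[F] V)), α u v = 0) :
    ∀ u v w : V,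
      symProd (α u v) (w - h w) + symProd (α v w) (u - h u) + symProd (α w u) (v - h v)
        = (0 : V ⊗[F] V) := by
  intro u v w
  set K := LinearMap.ker (1 - (h : V →ₗ[F] V)) with hKdef
  -- skew-symmetry of α
  have skew : ∀ a b : V, α a b = - α b a := by
    intro a b
    have := halt (a + b)
    simp only [map_add, LinearMap.add_apply, halt] at this
    rw [eq_neg_iff_add_eq_zero, add_comm]
    simpa using this
  obtain ⟨x, hx0, hx⟩ := finrank_eq_one_iff'.mp hcodim
  obtain ⟨e, he⟩ := Submodule.Quotient.mk_surjective K x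
  -- decompose an arbitrary vector
  have decomp : ∀ z : V, ∃ c : F, z - c • e ∈ K := by
    intro z
    obtain ⟨c, hc⟩ := hx (Submodule.Quotient.mk z)
    refine ⟨c, ?_⟩
    rw [← Submodule.Quotient.mk_eq_zero]
    rw [← he] at hc
    rw [Submodule.Quotient.mk_sub, Submodule.Quotient.mk_smul, hc, sub_self]
  obtain ⟨cu, hku⟩ := decomp u
  obtain ⟨cv, hkv⟩ := decomp v
  obtain ⟨cw, hkw⟩ := decomp w
  set ku := u - cu • e with hkudef
  set kv := v - cv • e with hkvdef
  set kw := w - cw • e with hkwdef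
  -- fixed vectors
  have hfix : ∀ z : V, z ∈ K → h z = z := by
    intro z hz
    have h2 : z - h z = 0 := by simpa [hKdef] using hz
    exact (sub_eq_zero.mp h2).symm
  have hu : u = ku + cu • e := by rw [hkudef]; abel
  have hv : v = kv + cv • e := by rw [hkvdef]; abel
  have hw : w = kw + cw • e := by rw [hkwdef]; abel
  set d := e - h e with hddef
  have hsubu : u - h u = cu • d := by
    rw [hu, map_add, map_smul, hfix ku hku, hddef]
    rw [smul_sub]; abel
  have hsubv : v - h v = cv • d := by
    rw [hv, map_add, map_smul, hfix kv hkv, hddef]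
    rw [smul_sub]; abel
  have hsubw : w - h w = cw • d := by
    rw [hw, map_add, map_smul, hfix kw hkw, hddef]
    rw [smul_sub]; abel
  -- α on decomposed vectors
  have hα : ∀ (a b : V) (ca cb : F), a ∈ K → b ∈ K →
      α (a + ca • e) (b + cb • e) = ca • α e b - cb • α e a := by
    intro a b ca cb ha hb
    simp only [map_add, map_smul, LinearMap.add_apply, LinearMap.smul_apply,
      hvan a ha b hb, halt e]
    rw [skew a e]
    module
  have hαuv : α u v = cu • α e kv - cv • α e ku := by
    rw [hu, hv]; exact hα ku kv cu cv hku hkv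
  have hαvw : α v w = cv • α e kw - cw • α e kv := by
    rw [hv, hw]; exact hα kv kw cv cw hkv hkw
  have hαwu : α w u = cw • α e ku - cu • α e kw := by
    rw [hw, hu]; exact hα kw ku cw cu hkw hku
  have hzero : cw • (α u) v + cu • (α v) w + cv • (α w) u = 0 := by
    rw [hαuv, hαvw, hαwu]; module
  have hbil : ∀ a b c : V,
      symProd a (cw • d) + symProd b (cu • d) + symProd c (cv • d)
        = symProd (F := F) (cw • a + cu • b + cv • c) d := by
    intro a b c
    simp only [symProd, smul_tmul', tmul_smul, add_tmul, tmul_add]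
    module
  rw [hsubu, hsubv, hsubw, hbil, hzero]
  simp [symProd]
end

section
/- If codim V^h = 2 and α : Λ²V → V is linear with α(u∧v) = 0 whenever u ∈ V^h and v ∈ V, then the cyclic sum α(u∧v)(w − h·w) + α(v∧w)(u − h·u) + α(w∧u)(v − h·v) vanishes in S(V) for all u,v,w ∈ V. -/
open TensorProduct

/-!
Both `α` and `1 - h` vanish on `K = V^h`, so they descend to the plane `V ⧸ K`. There the
cyclic sum `B (α x y) (g z) + B (α y z) (g x) + B (α z x) (g y)` is an alternating trilinear
expression in `x, y, z`, hence zero: in coordinates it is the expansion of a `3 × 3`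
determinant with a repeated row.
-/

namespace LinearMap

section Plane

variable {R Q M N W : Type*} [CommRing R] [AddCommGroup Q] [Module R Q]
  [AddCommGroup M] [Module R M] [AddCommGroup N] [Module R N] [AddCommGroup W] [Module R W]

theorem IsAlt.apply_eq_smul_basis_fin_two {α : Q →ₗ[R] Q →ₗ[R] M} (hα : α.IsAlt)
    (b : Module.Basis (Fin 2) R Q) (x y : Q) :
    α x y = (b.repr x 0 * b.repr y 1 - b.repr x 1 * b.repr y 0) • α (b 0) (b 1) := by
  conv_lhs => rw [← b.sum_repr x, ← b.sum_repr y]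
  simp only [Fin.sum_univ_two, map_add, map_smul, add_apply, smul_apply, hα.self_eq_zero,
    ← hα.neg (b 0) (b 1), smul_zero, add_zero, zero_add]
  module

theorem IsAlt.cyclic_sum_eq_zero_of_basis_fin_two {α : Q →ₗ[R] Q →ₗ[R] M} (hα : α.IsAlt)
    (b : Module.Basis (Fin 2) R Q) (g : Q →ₗ[R] N) (B : M →ₗ[R] N →ₗ[R] W) (x y z : Q) :
    B (α x y) (g z) + B (α y z) (g x) + B (α z x) (g y) = 0 := by
  have hg : ∀ x, g x = b.repr x 0 • g (b 0) + b.repr x 1 • g (b 1) := fun x => by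
    conv_lhs => rw [← b.sum_repr x]
    simp only [Fin.sum_univ_two, map_add, map_smul]
  rw [hα.apply_eq_smul_basis_fin_two b x y, hα.apply_eq_smul_basis_fin_two b y z,
    hα.apply_eq_smul_basis_fin_two b z x, hg x, hg y, hg z]
  simp only [map_add, map_smul, smul_apply]
  module

end Plane

theorem IsAlt.cyclic_sum_eq_zero_of_finrank_quotient_eq_two {F V M N W : Type*} [Field F]
    [AddCommGroup V] [Module F V] [AddCommGroup M] [Module F M] [AddCommGroup N] [Module F N]
    [AddCommGroup W] [Module F W] {K : Submodule F V} (hK : Module.finrank F (V ⧸ K) = 2)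
    {α : V →ₗ[F] V →ₗ[F] M} (hα : α.IsAlt) (hαK : K ≤ α.ker) (f : V →ₗ[F] N) (hfK : K ≤ f.ker)
    (B : M →ₗ[F] N →ₗ[F] W) (u v w : V) :
    B (α u v) (f w) + B (α v w) (f u) + B (α w u) (f v) = 0 := by
  have : Module.Finite F (V ⧸ K) := Module.finite_of_finrank_pos (by omega)
  let ᾱ := hα.isRefl.liftQ₂ α K hαK
  have hᾱ : ᾱ.IsAlt := by
    rintro ⟨x⟩
    exact hα x
  exact hᾱ.cyclic_sum_eq_zero_of_basis_fin_two (Module.finBasisOfFinrankEq F _ hK)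
    (K.liftQ f hfK) B (K.mkQ u) (K.mkQ v) (K.mkQ w)

end LinearMap

theorem stmt12_general {F V : Type*} [Field F] [AddCommGroup V] [Module F V]
    (h : V ≃ₗ[F] V)
    (hcodim : Module.finrank F (V ⧸ LinearMap.ker (1 - (h : V →ₗ[F] V))) = 2)
    (α : V →ₗ[F] V →ₗ[F] V) (halt : ∀ u : V, α u u = 0)
    (hvan : ∀ u ∈ LinearMap.ker (1 - (h : V →ₗ[F] V)), ∀ v : V, α u v = 0) :
    ∀ u v w : V,
      symProd (α u v) (w - h w) + symProd (α v w) (u - h u) + symProd (α w u) (v - h v)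
        = (0 : V ⊗[F] V) := by
  intro u v w
  have hαK : LinearMap.ker (1 - (h : V →ₗ[F] V)) ≤ α.ker := fun x hx =>
    LinearMap.ext (hvan x hx)
  exact LinearMap.IsAlt.cyclic_sum_eq_zero_of_finrank_quotient_eq_two hcodim halt hαK
    (1 - (h : V →ₗ[F] V)) le_rfl (TensorProduct.mk F V V + (TensorProduct.mk F V V).flip) u v w

/-- If `codim V^h = 2` and `α(u∧v) = 0` whenever `u ∈ V^h` and `v ∈ V`, then the cyclic
sum `α(u∧v)(w - h·w) + α(v∧w)(u - h·u) + α(w∧u)(v - h·v)` vanishes in `S(V)`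
for all `u,v,w ∈ V`. -/
theorem stmt12 {F V : Type*} [Field F] [AddCommGroup V] [Module F V]
    [FiniteDimensional F V] (hchar : (2 : F) ≠ 0)
    (h : V ≃ₗ[F] V)
    (hcodim : Module.finrank F (V ⧸ LinearMap.ker (1 - (h : V →ₗ[F] V))) = 2)
    (α : V →ₗ[F] V →ₗ[F] V) (halt : ∀ u : V, α u u = 0)
    (hvan : ∀ u ∈ LinearMap.ker (1 - (h : V →ₗ[F] V)), ∀ v : V, α u v = 0) :
    ∀ u v w : V,
      symProd (α u v) (w - h w) + symProd (α v w) (u - h u) + symProd (α w u) (v - h v)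
        = (0 : V ⊗[F] V) :=
  stmt12_general h hcodim α halt hvan
end

section
/- Let h ∈ GL(V) with codim V^h > 2, and suppose α : Λ²V → V is identically zero and λ : V → F is linear with λ(v)(u − h·u) = λ(u)(v − h·v) for all u,v ∈ V. Then λ ≡ 0. -/
/-- If `codim V^h > 2` and `λ : V → F` is linear with
`λ(v)(u - h·u) = λ(u)(v - h·v)` for all `u, v ∈ V`, then `λ ≡ 0`. -/
theorem stmt13 {F V : Type*} [Field F] [AddCommGroup V] [Module F V]
    [FiniteDimensional F V] (hchar : (2 : F) ≠ 0)
    (h : V ≃ₗ[F] V)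
    (hcodim : 2 < Module.finrank F (V ⧸ LinearMap.ker (1 - (h : V →ₗ[F] V))))
    (lam : V →ₗ[F] F)
    (hrel : ∀ u v : V, lam v • (u - h u) = lam u • (v - h v)) :
    lam = 0 := by
  by_contra hlam
  obtain ⟨v, hv⟩ : ∃ v, lam v ≠ 0 := by
    by_contra h'
    push_neg at h'
    exact hlam (LinearMap.ext fun x => h' x)
  have hrange : LinearMap.range (1 - (h : V →ₗ[F] V)) ≤
      Submodule.span F {v - h v} := by
    rintro _ ⟨u, rfl⟩
    have hr := hrel u v
    rw [Submodule.mem_span_singleton]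
    refine ⟨(lam v)⁻¹ * lam u, ?_⟩
    have : (1 - (h : V →ₗ[F] V)) u = u - h u := by
      simp [LinearMap.sub_apply]
    rw [this, mul_smul, ← hr, inv_smul_smul₀ hv]
  have h1 : Module.finrank F (V ⧸ LinearMap.ker (1 - (h : V →ₗ[F] V))) =
      Module.finrank F (LinearMap.range (1 - (h : V →ₗ[F] V))) :=
    (LinearMap.quotKerEquivRange _).finrank_eq
  have h2 : Module.finrank F (LinearMap.range (1 - (h : V →ₗ[F] V))) ≤
      Module.finrank F (Submodule.span F ({v - h v} : Set V)) :=
    Submodule.finrank_mono hrange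
  have h3 : Module.finrank F (Submodule.span F ({v - h v} : Set V)) ≤ 1 :=
    (finrank_span_le_card _).trans (by simp)
  omega
end
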